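/- arXiv:1807.08783 — 3 statements merged into one kernel-verified Lean document; each statement's English description precedes it below -/
import Mathlib

section
/- Let x ∉ D and let n ≥ 1 be such that g_n'(x) = 1. Let y_n be the smallest element of D_n greater than x. Then for every t with 0 < t < 2^{−n−5}, one has (T(y_n − t) − T(x))/(y_n − t − x) ≤ G_{n−1}'(x) + 2/5, where G_{n−1}'(x) = g_1'(x) + ⋯ + g_{n−1}'(x). -/
open MeasureTheory Filter Set

noncomputable section

/-- The set of dyadic numbers of level `n`: `{k / 2^n : k ∈ ℤ}`. -/
def Dset (n : ℕ) : Set ℝ := {y : ℝ | ∃ k : ℤ, y = (k : ℝ) / 2 ^ n}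

/-- The set of all dyadic numbers. -/
def Ddyadic : Set ℝ := ⋃ n, Dset n

/-- `g k x = dist(x, D_k)`. -/
def g (k : ℕ) (x : ℝ) : ℝ := Metric.infDist x (Dset k)

/-- The Takagi function `T x = ∑_{k=1}^∞ g_k(x)`. -/
def T (x : ℝ) : ℝ := ∑' k : ℕ, g (k + 1) x

/-- `G' n x = g_1'(x) + ⋯ + g_n'(x)` (so `G' 0 x = 0`). -/
def G' (n : ℕ) (x : ℝ) : ℝ := ∑ k ∈ Finset.range n, deriv (g (k + 1)) x

/-- `f` is approximately derivable at `x` with approximate derivative `L`: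
for every `ε > 0`, the relative measure of the set of points `y` in `(x - r, x + r)`,
`y ≠ x`, where `|(f y - f x - L (y - x)) / (y - x)| ≥ ε`, divided by `2r`,
tends to `0` as `r → 0⁺`. -/
def ApproxDerivAt (f : ℝ → ℝ) (x L : ℝ) : Prop :=
  ∀ ε > (0 : ℝ), Tendsto
    (fun r : ℝ => volume (Ioo (x - r) (x + r) ∩
        {y : ℝ | y ≠ x ∧ ε ≤ |(f y - f x - L * (y - x)) / (y - x)|}) /
      ENNReal.ofReal (2 * r))
    (nhdsWithin 0 (Ioi 0)) (nhds 0)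

/-!
On the dyadic interval `[y_n - 2^{-n}, y_n]` the functions `g_1, …, g_{n-1}` are affine, so they
contribute exactly `G_{n-1}'(x) (y_n - t - x)` to `T(y_n - t) - T(x)`. Since `g_n'(x) = 1`, the point
`x` lies in the left half of that interval, so `g_n(x) = x - (y_n - 2^{-n})`, while
`g_n(y_n - t) = t`. Of the higher levels, `g_{n+1}(y_n - t) ≤ t` and `∑_{k ≥ n+2} g_k ≤ 2^{-n-2}`.
As `y_n - x < 2^{-n}` and `t < 2^{-n-5}`, the total `t - g_n(x) + t + 2^{-n-2}` of the levels `≥ n`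
is at most `(2/5) (y_n - t - x)`.
-/

namespace Takagi

lemma Dset_mono {i j : ℕ} (h : i ≤ j) : Dset i ⊆ Dset j := by
  obtain ⟨d, rfl⟩ := Nat.exists_eq_add_of_le h
  rintro z ⟨k, rfl⟩
  exact ⟨k * 2 ^ d, by push_cast; rw [pow_add]; field_simp⟩

lemma sub_inv_two_pow_mem_Dset {j : ℕ} {z : ℝ} (hz : z ∈ Dset j) : z - (2 ^ j)⁻¹ ∈ Dset j := by
  obtain ⟨k, rfl⟩ := hz
  exact ⟨k - 1, by push_cast; ring⟩

lemma inv_two_pow_le_abs_sub {j : ℕ} {z w : ℝ} (hz : z ∈ Dset j) (hw : w ∈ Dset j)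
    (hne : z ≠ w) : (2 ^ j)⁻¹ ≤ |z - w| := by
  obtain ⟨k, rfl⟩ := hz
  obtain ⟨l, rfl⟩ := hw
  have hkl : (1 : ℝ) ≤ |(k : ℝ) - l| := by
    exact_mod_cast Int.one_le_abs (sub_ne_zero.2 fun h => hne (by rw [h]))
  rw [← sub_div, abs_div, abs_of_pos (by positivity : (0 : ℝ) < 2 ^ j), inv_eq_one_div]
  gcongr

lemma g_nonneg (j : ℕ) (y : ℝ) : 0 ≤ g j y := Metric.infDist_nonneg

lemma g_le_abs_sub {j : ℕ} {z : ℝ} (hz : z ∈ Dset j) (y : ℝ) : g j y ≤ |y - z| :=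
  Metric.infDist_le_dist_of_mem hz

lemma g_eq_zero_of_mem {j : ℕ} {z : ℝ} (hz : z ∈ Dset j) : g j z = 0 :=
  Metric.infDist_zero_of_mem hz

lemma g_le_inv_two_pow (j : ℕ) (y : ℝ) : g j y ≤ (2 ^ (j + 1))⁻¹ := by
  have hP : (0 : ℝ) < 2 ^ j := by positivity
  calc g j y ≤ |y - round (2 ^ j * y) / 2 ^ j| := g_le_abs_sub ⟨_, rfl⟩ y
    _ = |2 ^ j * y - round (2 ^ j * y)| / 2 ^ j := by
        rw [← abs_of_pos hP, ← abs_div, abs_of_pos hP]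
        congr 1
        field_simp
    _ ≤ 1 / 2 / 2 ^ j := by gcongr; exact abs_sub_round _
    _ = (2 ^ (j + 1))⁻¹ := by rw [pow_succ]; field_simp

lemma g_eq_abs_sub {j : ℕ} {y c : ℝ} (hc : c ∈ Dset j) (hy : |y - c| ≤ (2 ^ (j + 1))⁻¹) :
    g j y = |y - c| := by
  refine le_antisymm (g_le_abs_sub hc y) ((Metric.le_infDist ⟨c, hc⟩).2 fun z hz => ?_)
  rw [Real.dist_eq]
  rcases eq_or_ne z c with rfl | hne
  · rfl
  have hzc := inv_two_pow_le_abs_sub hz hc hne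
  have htri := abs_sub_le z y c
  have hhalf : ((2 : ℝ) ^ (j + 1))⁻¹ = (2 ^ j)⁻¹ / 2 := by rw [pow_succ]; field_simp
  rw [abs_sub_comm z y] at htri
  linarith

lemma g_add_le_geometric (m k : ℕ) (y : ℝ) : g (k + m) y ≤ (2 ^ m)⁻¹ / 2 / 2 ^ k :=
  (g_le_inv_two_pow _ _).trans_eq (by rw [pow_succ, pow_add]; field_simp)

lemma summable_g_add (m : ℕ) (y : ℝ) : Summable fun k => g (k + m) y :=
  (summable_geometric_two' _).of_nonneg_of_le (fun _ => g_nonneg _ _) (g_add_le_geometric m · y)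

lemma tsum_g_add_le (m : ℕ) (y : ℝ) : ∑' k, g (k + m) y ≤ (2 ^ m)⁻¹ :=
  (Summable.tsum_le_tsum (g_add_le_geometric m · y) (summable_g_add m y)
    (summable_geometric_two' _)).trans_eq (tsum_geometric_two' _)

lemma T_sub_le_sum_add (N : ℕ) (x y : ℝ) :
    T y - T x ≤ ∑ k ∈ Finset.range N, (g (k + 1) y - g (k + 1) x) + (2 ^ (N + 1))⁻¹ := by
  have hsum := (summable_g_add 1 y).sub (summable_g_add 1 x)
  rw [T, T, ← (summable_g_add 1 y).tsum_sub (summable_g_add 1 x),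
    ← hsum.sum_add_tsum_nat_add N]
  gcongr
  calc ∑' k, (g (k + N + 1) y - g (k + N + 1) x) ≤ ∑' k, g (k + (N + 1)) y :=
        Summable.tsum_le_tsum (fun k => sub_le_self _ (g_nonneg _ _))
          ((summable_nat_add_iff N).2 hsum) (summable_g_add _ y)
    _ ≤ (2 ^ (N + 1))⁻¹ := tsum_g_add_le _ _

lemma exists_Icc_superset {i j : ℕ} (hji : j ≤ i) {p : ℝ} (hp : p ∈ Dset i) :
    ∃ q ∈ Dset j, Icc p (p + (2 ^ i)⁻¹) ⊆ Icc q (q + (2 ^ j)⁻¹) := by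
  obtain ⟨d, rfl⟩ := Nat.exists_eq_add_of_le hji
  obtain ⟨A, rfl⟩ := hp
  have h2d : (0 : ℤ) < 2 ^ d := by positivity
  have hlow : ((A / 2 ^ d : ℤ) : ℝ) ≤ A / 2 ^ d := by
    rw [le_div_iff₀ (by positivity)]
    exact_mod_cast Int.ediv_mul_le A h2d.ne'
  have hupp : ((A : ℝ) + 1) / 2 ^ d ≤ (A / 2 ^ d : ℤ) + 1 := by
    rw [div_le_iff₀ (by positivity)]
    exact_mod_cast Int.lt_ediv_add_one_mul_self A h2d
  have hsplit (r : ℝ) : r / 2 ^ (j + d) = r / 2 ^ d / 2 ^ j := by rw [pow_add, div_div, mul_comm]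
  refine ⟨_, ⟨A / 2 ^ d, rfl⟩, Icc_subset_Icc ?_ ?_⟩
  · rw [hsplit]
    gcongr
  · calc (A : ℝ) / 2 ^ (j + d) + (2 ^ (j + d))⁻¹ = ((A : ℝ) + 1) / 2 ^ d / 2 ^ j := by
          rw [← hsplit]; ring
      _ ≤ (((A / 2 ^ d : ℤ) : ℝ) + 1) / 2 ^ j := by gcongr
      _ = _ := by ring

lemma exists_eqOn_g_affine {j : ℕ} {p : ℝ} (hp : p ∈ Dset (j + 1)) :
    ∃ s c : ℝ, EqOn (g j) (fun y => s * (y - c)) (Icc p (p + (2 ^ (j + 1))⁻¹)) := by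
  obtain ⟨B, rfl⟩ := hp
  obtain ⟨k, rfl | rfl⟩ := Int.even_or_odd' B
  · have hc : ((2 * k : ℤ) : ℝ) / 2 ^ (j + 1) ∈ Dset j :=
      ⟨k, by push_cast; rw [pow_succ]; field_simp⟩
    refine ⟨1, ((2 * k : ℤ) : ℝ) / 2 ^ (j + 1), fun y hy => ?_⟩
    have h0 : 0 ≤ y - ((2 * k : ℤ) : ℝ) / 2 ^ (j + 1) := by linarith [hy.1]
    rw [g_eq_abs_sub hc (by rw [abs_of_nonneg h0]; linarith [hy.2]), abs_of_nonneg h0]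
    ring
  · have hc : ((2 * k + 1 : ℤ) : ℝ) / 2 ^ (j + 1) + (2 ^ (j + 1))⁻¹ ∈ Dset j :=
      ⟨k + 1, by push_cast; rw [pow_succ]; field_simp; ring⟩
    refine ⟨-1, ((2 * k + 1 : ℤ) : ℝ) / 2 ^ (j + 1) + (2 ^ (j + 1))⁻¹, fun y hy => ?_⟩
    have h0 : y - (((2 * k + 1 : ℤ) : ℝ) / 2 ^ (j + 1) + (2 ^ (j + 1))⁻¹) ≤ 0 := by
      linarith [hy.2]
    rw [g_eq_abs_sub hc (by rw [abs_of_nonpos h0]; linarith [hy.1]), abs_of_nonpos h0]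
    ring

lemma g_sub_eq_deriv_mul {i j : ℕ} (hji : j < i) {p x y : ℝ} (hp : p ∈ Dset i)
    (hx : x ∈ Ioo p (p + (2 ^ i)⁻¹)) (hy : y ∈ Icc p (p + (2 ^ i)⁻¹)) :
    g j y - g j x = deriv (g j) x * (y - x) := by
  obtain ⟨q, hq, hsub⟩ := exists_Icc_superset hji hp
  obtain ⟨s, c, hsc⟩ := exists_eqOn_g_affine hq
  have hloc : g j =ᶠ[nhds x] fun y => s * (y - c) :=
    eventually_of_mem (Ioo_mem_nhds hx.1 hx.2) fun z hz => hsc (hsub (Ioo_subset_Icc_self hz))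
  have hderiv : HasDerivAt (g j) s x := by
    simpa using (((hasDerivAt_id x).sub_const c).const_mul s).congr_of_eventuallyEq hloc
  rw [hderiv.deriv, hsc (hsub hy), hsc (hsub (Ioo_subset_Icc_self hx))]
  ring

lemma g_eq_sub_of_deriv_eq_one {j : ℕ} {z x : ℝ} (hz : z ∈ Dset j)
    (hx : x ∈ Ioo (z - (2 ^ j)⁻¹) z) (hxD : x ∉ Dset (j + 1)) (hg : deriv (g j) x = 1) :
    g j x = x - (z - (2 ^ j)⁻¹) := by
  have hhalf : ((2 : ℝ) ^ j)⁻¹ = 2 * (2 ^ (j + 1))⁻¹ := by rw [pow_succ]; field_simp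
  have hpos : (0 : ℝ) < (2 ^ (j + 1))⁻¹ := by positivity
  have ha := sub_inv_two_pow_mem_Dset hz
  have hmid : z - (2 ^ (j + 1))⁻¹ ∈ Dset (j + 1) :=
    sub_inv_two_pow_mem_Dset (Dset_mono (Nat.le_add_right j 1) hz)
  rcases lt_or_gt_of_ne fun h : x = z - (2 ^ (j + 1))⁻¹ => hxD (h ▸ hmid) with hleft | hright
  · have := g_sub_eq_deriv_mul (Nat.lt_add_one j) (Dset_mono (Nat.le_add_right j 1) ha)
      (y := z - (2 ^ j)⁻¹) ⟨hx.1, by linarith⟩ ⟨le_rfl, by linarith⟩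
    rw [g_eq_zero_of_mem ha, hg] at this
    linarith
  · -- slope `1` on the right half would force `g j x = x - z < 0`
    have := g_sub_eq_deriv_mul (Nat.lt_add_one j) hmid (y := z)
      ⟨hright, by linarith [hx.2]⟩ ⟨by linarith, by linarith⟩
    rw [g_eq_zero_of_mem hz, hg] at this
    linarith [g_nonneg j x, hx.2]

end Takagi

open Takagi in
theorem takagi_slope_upper_bound (x : ℝ) (hx : x ∉ Ddyadic)
    (n : ℕ) (hn : 1 ≤ n) (hg : deriv (g n) x = 1)
    (yn : ℝ) (hyn : yn ∈ Dset n) (hxy : x < yn)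
    (hmin : ∀ z ∈ Dset n, x < z → yn ≤ z) :
    ∀ t : ℝ, 0 < t → t < ((2 : ℝ) ^ (n + 5))⁻¹ →
      (T (yn - t) - T x) / (yn - t - x) ≤ G' (n - 1) x + 2 / 5 := by
  intro t ht htn
  obtain ⟨N, rfl⟩ : ∃ N, n = N + 1 := ⟨n - 1, by omega⟩
  have hxD (j : ℕ) : x ∉ Dset j := fun h => hx (mem_iUnion.2 ⟨j, h⟩)
  set P : ℝ := (2 ^ (N + 1))⁻¹ with hP
  have hPpos : 0 < P := by positivity
  have hpow (k : ℕ) : ((2 : ℝ) ^ (N + 1 + k))⁻¹ = P / 2 ^ k := by rw [hP, pow_add]; field_simp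
  have ha : yn - P ∈ Dset (N + 1) := sub_inv_two_pow_mem_Dset hyn
  have hax : yn - P < x := by
    refine lt_of_le_of_ne (not_lt.1 fun h => ?_) fun h => hxD _ (h ▸ ha)
    linarith [hmin _ ha h]
  have hgx : g (N + 1) x = x - (yn - P) := g_eq_sub_of_deriv_eq_one hyn ⟨hax, hxy⟩ (hxD _) hg
  rw [hpow] at htn
  have hut : |yn - t - yn| = t := by rw [sub_sub_cancel_left, abs_neg, abs_of_pos ht]
  have hgu : g (N + 1) (yn - t) = t := by
    rw [g_eq_abs_sub hyn (by rw [hut, hpow 1]; linarith), hut]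
  have hgu' : g (N + 2) (yn - t) ≤ t :=
    (g_le_abs_sub (Dset_mono (Nat.le_add_right _ 1) hyn) (yn - t)).trans_eq hut
  have hlow : ∑ k ∈ Finset.range N, (g (k + 1) (yn - t) - g (k + 1) x)
      = G' N x * (yn - t - x) := by
    rw [G', Finset.sum_mul]
    refine Finset.sum_congr rfl fun k hk => g_sub_eq_deriv_mul (by simpa using hk) ha
      ⟨hax, by linarith⟩ ⟨by linarith, by linarith⟩
  have hT := T_sub_le_sum_add (N + 2) x (yn - t)
  rw [Finset.sum_range_succ, Finset.sum_range_succ, hlow, hgx, hgu, hpow 2] at hT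
  have hxmid : x - (yn - P) ≤ P / 2 := by
    simpa [hgx, hpow 1] using g_le_inv_two_pow (N + 1) x
  rw [Nat.add_sub_cancel, div_le_iff₀ (by linarith), add_mul]
  linarith [g_nonneg (N + 2) x]
end
end

section
/- Let x ∉ D and let n ≥ 1 be such that g_n'(x) = 1. Then μ({y : 0 < |x − y| < 2^{−n} and (T(y) − T(x))/(y − x) ≤ G_{n−1}'(x) + 2/5}) ≥ 2^{−(n+5)}, where μ denotes Lebesgue measure on ℝ and G_{n−1}'(x) = g_1'(x) + ⋯ + g_{n−1}'(x) (with G_0'(x) = 0). -/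
open MeasureTheory Filter Set

noncomputable section

/-! On the level-`n` dyadic interval `[a, a + 2⁻ⁿ]` containing `x`, the functions
`g_1, …, g_{n-1}` are affine, so `G_{n-1}` contributes exactly the slope `G'_{n-1}(x)`.
Since `g_n'(x) = 1`, the point `x` lies in the left half of that interval, so the tail
`∑_{k ≥ n} g_k` is at least `g_n(x) = x - a` at `x`. The right endpoint `a + 2⁻ⁿ` lies in every
`D_k` with `k ≥ n`, so near it the tail at `y` is at most `4 (a + 2⁻ⁿ - y) + 2^{-(n+4)}`.
On `(a + 15/16 · 2⁻ⁿ, a + 31/32 · 2⁻ⁿ)`, of length `2^{-(n+5)}`, these bounds give the slope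
estimate. -/

open Topology

lemma intCast_div_two_pow_mem_Dset (k : ℕ) (j : ℤ) : (j : ℝ) / 2 ^ k ∈ Dset k := ⟨j, rfl⟩

lemma Dset_nonempty (k : ℕ) : (Dset k).Nonempty := ⟨_, intCast_div_two_pow_mem_Dset k 0⟩

lemma Dset_mono : Monotone Dset := by
  intro k l hkl y ⟨j, hj⟩
  refine ⟨j * 2 ^ (l - k), ?_⟩
  rw [hj, ← Nat.add_sub_of_le hkl, pow_add]
  push_cast
  field_simp
  simp

lemma floor_lt_of_notMem_Ddyadic {x : ℝ} (hx : x ∉ Ddyadic) (k : ℕ) :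
    (⌊(2 : ℝ) ^ k * x⌋ : ℝ) < 2 ^ k * x := by
  refine (Int.floor_le _).lt_of_ne fun h => hx (mem_iUnion.2 ⟨k, ⌊(2 : ℝ) ^ k * x⌋, ?_⟩)
  rw [h]
  field_simp

lemma g_nonneg (k : ℕ) (t : ℝ) : 0 ≤ g k t := Metric.infDist_nonneg

lemma g_le_abs_sub {k : ℕ} {y : ℝ} (hy : y ∈ Dset k) (t : ℝ) : g k t ≤ |t - y| := by
  simpa [g, Real.dist_eq] using Metric.infDist_le_dist_of_mem hy

lemma antitone_g (t : ℝ) : Antitone fun k => g k t :=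
  fun _ _ hkl => Metric.infDist_le_infDist_of_subset (Dset_mono hkl) (Dset_nonempty _)

lemma abs_sub_div_two_pow (k : ℕ) (t s : ℝ) : |t - s / 2 ^ k| = |2 ^ k * t - s| / 2 ^ k := by
  rw [show t - s / 2 ^ k = (2 ^ k * t - s) / 2 ^ k by field_simp, abs_div,
    abs_of_pos (by positivity : (0 : ℝ) < 2 ^ k)]

lemma g_eq_abs_sub {k : ℕ} {t : ℝ} {j : ℤ} (h : |2 ^ k * t - j| ≤ 1 / 2) :
    g k t = |t - j / 2 ^ k| := by
  have hp : (0 : ℝ) < 2 ^ k := by positivity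
  refine le_antisymm (g_le_abs_sub (intCast_div_two_pow_mem_Dset k j) t) ?_
  refine (Metric.le_infDist (Dset_nonempty k)).2 ?_
  rintro _ ⟨i, rfl⟩
  rw [Real.dist_eq, abs_sub_div_two_pow, abs_sub_div_two_pow]
  refine div_le_div_of_nonneg_right ?_ hp.le
  rcases eq_or_ne i j with rfl | hij
  · rfl
  have hij : (1 : ℝ) ≤ |(i : ℝ) - j| := by exact_mod_cast Int.one_le_abs (sub_ne_zero.2 hij)
  have := abs_sub_le (i : ℝ) (2 ^ k * t) j
  rw [abs_sub_comm (i : ℝ) (2 ^ k * t)] at this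
  linarith

lemma g_le_inv_two_pow (k : ℕ) (t : ℝ) : g k t ≤ (2 ^ (k + 1))⁻¹ := by
  rw [g_eq_abs_sub (abs_sub_round _), abs_sub_div_two_pow, pow_succ, mul_inv, div_eq_mul_inv,
    mul_comm]
  gcongr
  simpa using abs_sub_round ((2 : ℝ) ^ k * t)

lemma g_eq_of_left_half {k : ℕ} {t : ℝ} {q : ℤ} (h₁ : q ≤ 2 ^ k * t)
    (h₂ : 2 ^ k * t ≤ q + 1 / 2) : g k t = t - q / 2 ^ k := by
  rw [g_eq_abs_sub (j := q) (abs_le.2 ⟨by linarith, by linarith⟩), abs_of_nonneg]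
  rw [sub_nonneg, div_le_iff₀ (by positivity)]
  linarith

lemma g_eq_of_right_half {k : ℕ} {t : ℝ} {q : ℤ} (h₁ : q + 1 / 2 ≤ 2 ^ k * t)
    (h₂ : 2 ^ k * t ≤ q + 1) : g k t = (q + 1) / 2 ^ k - t := by
  have h := g_eq_abs_sub (k := k) (t := t) (j := q + 1) (abs_le.2 ⟨by push_cast; linarith,
    by push_cast; linarith⟩)
  rw [h, abs_of_nonpos, neg_sub]
  · push_cast; rfl
  rw [sub_nonpos, le_div_iff₀ (by positivity)]
  push_cast
  linarith

lemma summable_g (c : ℕ) (t : ℝ) : Summable fun j => g (j + c) t := by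
  refine .of_nonneg_of_le (fun _ => g_nonneg _ _) (fun j => (g_le_inv_two_pow _ _).trans ?_)
    summable_geometric_two
  rw [one_div, inv_pow]
  exact inv_anti₀ (by positivity) (pow_le_pow_right₀ one_le_two (by omega))

lemma tsum_g_le_inv_two_pow (c : ℕ) (t : ℝ) : ∑' j, g (j + c) t ≤ (2 ^ c)⁻¹ := by
  have hgeom := hasSum_geometric_two.mul_right ((2 : ℝ) ^ (c + 1))⁻¹
  rw [show 2 * ((2 : ℝ) ^ (c + 1))⁻¹ = (2 ^ c)⁻¹ by rw [pow_succ]; field_simp] at hgeom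
  refine hasSum_le (fun j => (g_le_inv_two_pow _ _).trans_eq ?_) (summable_g c t).hasSum hgeom
  rw [one_div, inv_pow, ← mul_inv, ← pow_add]
  ring_nf

lemma g_le_tsum_g (c : ℕ) (t : ℝ) : g c t ≤ ∑' j, g (j + c) t := by
  simpa using (summable_g c t).le_tsum 0 fun j _ => g_nonneg _ _

lemma tsum_g_le_mul_add (N c : ℕ) (t : ℝ) :
    ∑' j, g (j + c) t ≤ N * g c t + (2 ^ (N + c))⁻¹ := by
  rw [← (summable_g c t).sum_add_tsum_nat_add N]
  gcongr
  · simpa using Finset.sum_le_sum fun j (_ : j ∈ Finset.range N) =>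
      antitone_g t (Nat.le_add_left c j)
  · simpa only [add_assoc] using tsum_g_le_inv_two_pow (N + c) t

lemma setOf_le_mul_le_mem_nhds {a b c x : ℝ} (h₁ : a < c * x) (h₂ : c * x < b) :
    {t | a ≤ c * t ∧ c * t ≤ b} ∈ 𝓝 x :=
  mem_of_superset ((continuous_const.mul continuous_id).continuousAt.preimage_mem_nhds
    (Ioo_mem_nhds h₁ h₂)) fun _ ht => ⟨ht.1.le, ht.2.le⟩

def dyadicIcc (k : ℕ) (x : ℝ) : Set ℝ :=
  {t | ⌊(2 : ℝ) ^ k * x⌋ ≤ 2 ^ k * t ∧ 2 ^ k * t ≤ ⌊(2 : ℝ) ^ k * x⌋ + 1}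

lemma dyadicIcc_mem_nhds {x : ℝ} (hx : x ∉ Ddyadic) (k : ℕ) : dyadicIcc k x ∈ 𝓝 x :=
  setOf_le_mul_le_mem_nhds (floor_lt_of_notMem_Ddyadic hx k) (Int.lt_floor_add_one _)

lemma dyadicIcc_subset {k l : ℕ} (hkl : k ≤ l) (x : ℝ) : dyadicIcc l x ⊆ dyadicIcc k x := by
  obtain ⟨e, rfl⟩ := Nat.exists_eq_add_of_le hkl
  have he : (0 : ℝ) < 2 ^ e := by positivity
  set j := ⌊(2 : ℝ) ^ k * x⌋
  set m := ⌊(2 : ℝ) ^ (k + e) * x⌋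
  have hjm : (j : ℝ) * 2 ^ e ≤ m := by
    have : j * 2 ^ e ≤ m := Int.le_floor.2 (by
      push_cast; rw [pow_add]; nlinarith [Int.floor_le ((2 : ℝ) ^ k * x)])
    exact_mod_cast this
  have hmj : (m : ℝ) + 1 ≤ (j + 1) * 2 ^ e := by
    have : m < (j + 1) * 2 ^ e := Int.floor_lt.2 (by
      push_cast; rw [pow_add]; nlinarith [Int.lt_floor_add_one ((2 : ℝ) ^ k * x)])
    exact_mod_cast Int.add_one_le_of_lt this
  have hscale : ∀ t : ℝ, (2 : ℝ) ^ (k + e) * t = 2 ^ k * t * 2 ^ e := fun t => by ring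
  rintro t ⟨ht₁, ht₂⟩
  exact ⟨le_of_mul_le_mul_right (hjm.trans (hscale t ▸ ht₁)) he,
    le_of_mul_le_mul_right ((hscale t ▸ ht₂).trans hmj) he⟩

lemma g_eqOn_dyadicIcc (k : ℕ) (x : ℝ) :
    ∃ s c : ℝ, EqOn (g k) (fun t => s * t + c) (dyadicIcc (k + 1) x) := by
  obtain ⟨q, hq | hq⟩ := Int.even_or_odd' ⌊(2 : ℝ) ^ (k + 1) * x⌋
  · refine ⟨1, -(q / 2 ^ k), fun t ⟨ht₁, ht₂⟩ => ?_⟩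
    rw [hq, pow_succ] at ht₁ ht₂
    push_cast at ht₁ ht₂
    rw [g_eq_of_left_half (q := q) (by linarith) (by linarith)]
    ring
  · refine ⟨-1, (q + 1) / 2 ^ k, fun t ⟨ht₁, ht₂⟩ => ?_⟩
    rw [hq, pow_succ] at ht₁ ht₂
    push_cast at ht₁ ht₂
    rw [g_eq_of_right_half (q := q) (by linarith) (by linarith)]
    ring

lemma deriv_eq_of_eqOn_affine {f : ℝ → ℝ} {s c x : ℝ} {U : Set ℝ} (hU : U ∈ 𝓝 x)
    (h : EqOn f (fun t => s * t + c) U) : deriv f x = s := by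
  rw [(h.eventuallyEq_of_mem hU).deriv_eq]
  simp

lemma g_sub_eq_deriv_mul {x t : ℝ} (hx : x ∉ Ddyadic) {k : ℕ} (ht : t ∈ dyadicIcc (k + 1) x) :
    g k t - g k x = deriv (g k) x * (t - x) := by
  obtain ⟨s, c, h⟩ := g_eqOn_dyadicIcc k x
  have hU := dyadicIcc_mem_nhds hx (k + 1)
  rw [deriv_eq_of_eqOn_affine hU h, h ht, h (mem_of_mem_nhds hU)]
  ring

lemma lt_floor_add_half_of_deriv_g_eq_one {x : ℝ} (hx : x ∉ Ddyadic) {k : ℕ}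
    (h : deriv (g k) x = 1) : 2 ^ k * x < ⌊(2 : ℝ) ^ k * x⌋ + 1 / 2 := by
  set q := ⌊(2 : ℝ) ^ k * x⌋
  by_contra! hle
  have hne : (q : ℝ) + 1 / 2 ≠ 2 ^ k * x := fun heq =>
    hx (mem_iUnion.2 ⟨k + 1, 2 * q + 1, by rw [pow_succ]; field_simp; push_cast; linarith⟩)
  have hU := setOf_le_mul_le_mem_nhds (hle.lt_of_ne hne) (Int.lt_floor_add_one ((2 : ℝ) ^ k * x))
  have hslope := deriv_eq_of_eqOn_affine (f := g k) (s := -1) (c := (q + 1) / 2 ^ k) hU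
    fun t ht => by simp only [g_eq_of_right_half ht.1 ht.2]; ring
  linarith

lemma T_eq_sum_add_tsum (N : ℕ) (t : ℝ) :
    T t = ∑ k ∈ Finset.range N, g (k + 1) t + ∑' j, g (j + (N + 1)) t :=
  ((summable_g 1 t).sum_add_tsum_nat_add N).symm

lemma sum_g_sub_sum_g_eq_G'_mul {x t : ℝ} (hx : x ∉ Ddyadic) {N : ℕ}
    (ht : t ∈ dyadicIcc (N + 1) x) :
    ∑ k ∈ Finset.range N, g (k + 1) t - ∑ k ∈ Finset.range N, g (k + 1) x =
      G' N x * (t - x) := by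
  rw [← Finset.sum_sub_distrib, G', Finset.sum_mul]
  refine Finset.sum_congr rfl fun k hk => g_sub_eq_deriv_mul hx ?_
  exact dyadicIcc_subset (by simpa using hk) x ht

lemma Ioo_subset_takagi_slope_le {x : ℝ} (hx : x ∉ Ddyadic) {n : ℕ} (hn : 1 ≤ n)
    (hg : deriv (g n) x = 1) :
    Ioo (((⌊(2 : ℝ) ^ n * x⌋ : ℝ) + 15 / 16) / 2 ^ n)
        ((⌊(2 : ℝ) ^ n * x⌋ + 31 / 32) / 2 ^ n) ⊆
      {y : ℝ | 0 < |x - y| ∧ |x - y| < ((2 : ℝ) ^ n)⁻¹ ∧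
        (T y - T x) / (y - x) ≤ G' (n - 1) x + 2 / 5} := by
  obtain ⟨N, rfl⟩ : ∃ N, n = N + 1 := ⟨n - 1, by omega⟩
  rw [Nat.add_sub_cancel]
  set a := ⌊(2 : ℝ) ^ (N + 1) * x⌋
  set h : ℝ := (2 ^ (N + 1))⁻¹
  have hp : (0 : ℝ) < 2 ^ (N + 1) := by positivity
  have hxa : (a : ℝ) < 2 ^ (N + 1) * x := floor_lt_of_notMem_Ddyadic hx _
  have hxh := lt_floor_add_half_of_deriv_g_eq_one hx hg
  have hscale : ∀ c : ℝ, (a + c) / 2 ^ (N + 1) = a / 2 ^ (N + 1) + c * h := fun c => by ring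
  have hx₁ : a / 2 ^ (N + 1) < x := by rw [div_lt_iff₀ hp]; linarith
  have hx₂ : x < a / 2 ^ (N + 1) + 1 / 2 * h := by rw [← hscale, lt_div_iff₀ hp]; linarith
  rintro y ⟨hy₁, hy₂⟩
  have hyI : y ∈ dyadicIcc (N + 1) x :=
    ⟨by linarith [(div_lt_iff₀ hp).1 hy₁], by linarith [(lt_div_iff₀ hp).1 hy₂]⟩
  rw [hscale] at hy₁ hy₂
  have hxy : x < y := by linarith
  have hgx : g (N + 1) x = x - a / 2 ^ (N + 1) := g_eq_of_left_half hxa.le hxh.le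
  have hgy : g (N + 1) y ≤ a / 2 ^ (N + 1) + h - y := by
    have hd := g_le_abs_sub (intCast_div_two_pow_mem_Dset (N + 1) (a + 1)) y
    rwa [Int.cast_add, Int.cast_one, hscale, one_mul, abs_of_nonpos (by linarith), neg_sub] at hd
  have htail : (2 ^ (4 + (N + 1)) : ℝ)⁻¹ = h / 16 := by rw [pow_add]; ring
  refine ⟨abs_pos.2 (sub_ne_zero.2 hxy.ne), ?_, ?_⟩
  · rw [abs_sub_comm, abs_of_pos (sub_pos.2 hxy)]
    linarith
  rw [div_le_iff₀ (sub_pos.2 hxy), T_eq_sum_add_tsum N y, T_eq_sum_add_tsum N x]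
  have hsum := sum_g_sub_sum_g_eq_G'_mul hx hyI
  have hlow := g_le_tsum_g (N + 1) x
  have hup := tsum_g_le_mul_add 4 (N + 1) y
  rw [htail] at hup
  push_cast at hup
  linarith

theorem takagi_lower_slope_measure (x : ℝ) (hx : x ∉ Ddyadic)
    (n : ℕ) (hn : 1 ≤ n) (hg : deriv (g n) x = 1) :
    ENNReal.ofReal (((2 : ℝ) ^ (n + 5))⁻¹) ≤
      volume {y : ℝ | 0 < |x - y| ∧ |x - y| < ((2 : ℝ) ^ n)⁻¹ ∧
        (T y - T x) / (y - x) ≤ G' (n - 1) x + 2 / 5} := by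
  refine le_of_eq_of_le ?_ (measure_mono (Ioo_subset_takagi_slope_le hx hn hg))
  rw [Real.volume_Ioo, pow_add]
  congr 1
  field_simp
  ring
end
end

section
/- Let x ∉ D. Suppose I = liminf_n G_n'(x) is finite, where G_n'(x) = g_1'(x) + ⋯ + g_n'(x), and suppose T is approximately derivable at x. Then limsup_{r→0⁺} μ({y : 0 < |y − x| < r and (T(y) − T(x))/(y − x) ≤ I + 2/5}) / (2r) ≥ 2^{−6} and limsup_{r→0⁺} μ({y : 0 < |y − x| < r and (T(y) − T(x))/(y − x) ≥ I + 3/5}) / (2r) ≥ 2^{−6}, where μ denotes Lebesgue measure on ℝ. -/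
/-!
On the closed dyadic interval of level `n + 1` containing `x`, every `g k` with `k ≤ n` is affine
with slope `g k' x`, and `T x = takagi (2 * x) / 2` for the classical Takagi function `takagi`.
So, writing a point of that interval as `(⌊2^(n+1) x⌋ + u) / 2^(n+1)`, the difference quotient of
`T` at `x` is `G' n x` plus the difference quotient of `takagi` between `u` and
`t = fract (2^(n+1) x)`.

`G' n x` is an integer walk with steps `±1` and liminf `I`, so infinitely often `G' n x = I` and
the next step goes up, which means `t < 1/2`. For such `n`, the bounds
`takagi u ≤ 5 dist(u, ℤ) + 1/32`, `takagi ≥ 1/2` on `[1/4, 1/2]` and `takagi ≥ 5/8` on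
`[5/16, 11/32]` give a window of length `1/32` in `u` on which the quotient is `≤ I + 2/5`, and
another on which it is `≥ I + 3/5`. At radius `2^-(n+1)` each window has relative measure `1/64`.
-/

open MeasureTheory Filter Set

noncomputable section

open Topology

def distNearestInt (r : ℝ) : ℝ := |r - round r|

lemma distNearestInt_nonneg (r : ℝ) : 0 ≤ distNearestInt r := abs_nonneg _

lemma distNearestInt_le_half (r : ℝ) : distNearestInt r ≤ 1 / 2 := abs_sub_round r

lemma distNearestInt_le (r : ℝ) (q : ℤ) : distNearestInt r ≤ |r - q| := round_le r q

lemma distNearestInt_eq_abs_sub {w : ℝ} {q : ℤ} (h : |w - q| ≤ 1 / 2) :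
    distNearestInt w = |w - q| := by
  refine le_antisymm (distNearestInt_le w q) ?_
  rcases eq_or_ne (round w) q with hq | hq
  · simp [distNearestInt, hq]
  have hfar : (1 : ℝ) ≤ |(q : ℝ) - round w| := by
    exact_mod_cast Int.one_le_abs (sub_ne_zero.2 hq.symm)
  have htri := abs_sub_le (q : ℝ) w (round w)
  rw [abs_sub_comm (q : ℝ) w] at htri
  unfold distNearestInt
  linarith

lemma distNearestInt_eq_sub_intCast {w : ℝ} {q : ℤ} (h : w ∈ Icc (q : ℝ) (q + 1 / 2)) :
    distNearestInt w = w - q := by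
  rw [distNearestInt_eq_abs_sub (q := q) (abs_le.2 ⟨by linarith [h.1], by linarith [h.2]⟩),
    abs_of_nonneg (by linarith [h.1])]

lemma distNearestInt_eq_intCast_sub {w : ℝ} {q : ℤ} (h : w ∈ Icc ((q : ℝ) - 1 / 2) q) :
    distNearestInt w = q - w := by
  rw [distNearestInt_eq_abs_sub (q := q) (abs_le.2 ⟨by linarith [h.1], by linarith [h.2]⟩),
    abs_of_nonpos (by linarith [h.2]), neg_sub]

lemma distNearestInt_intCast_add (q : ℤ) (r : ℝ) : distNearestInt (q + r) = distNearestInt r := by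
  simp only [distNearestInt, round_intCast_add, Int.cast_add, add_sub_add_left_eq_sub]

lemma distNearestInt_two_pow_mul_le (k : ℕ) (r : ℝ) :
    distNearestInt (2 ^ k * r) ≤ 2 ^ k * distNearestInt r :=
  calc distNearestInt (2 ^ k * r) ≤ |2 ^ k * r - ((2 ^ k * round r : ℤ) : ℝ)| :=
        distNearestInt_le _ _
    _ = |2 ^ k * (r - round r)| := by push_cast; ring_nf
    _ = 2 ^ k * distNearestInt r := by rw [abs_mul, abs_of_pos (by positivity), distNearestInt]

lemma distNearestInt_sub_distNearestInt {p : ℤ} {w w' : ℝ} (hw : 2 * w ∈ Icc (p : ℝ) (p + 1))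
    (hw' : 2 * w' ∈ Icc (p : ℝ) (p + 1)) :
    distNearestInt w - distNearestInt w' = (if Even p then 1 else -1) * (w - w') := by
  obtain ⟨q, rfl | rfl⟩ := Int.even_or_odd' p
  · have hmem : ∀ v : ℝ, 2 * v ∈ Icc ((2 * q : ℤ) : ℝ) ((2 * q : ℤ) + 1) →
        v ∈ Icc (q : ℝ) (q + 1 / 2) := fun v hv => by
      push_cast at hv; constructor <;> linarith [hv.1, hv.2]
    rw [distNearestInt_eq_sub_intCast (hmem w hw), distNearestInt_eq_sub_intCast (hmem w' hw'),
      if_pos (even_two_mul q)]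
    ring
  · have hmem : ∀ v : ℝ, 2 * v ∈ Icc ((2 * q + 1 : ℤ) : ℝ) ((2 * q + 1 : ℤ) + 1) →
        v ∈ Icc (((q + 1 : ℤ) : ℝ) - 1 / 2) ((q + 1 : ℤ) : ℝ) := fun v hv => by
      push_cast at hv ⊢; constructor <;> linarith [hv.1, hv.2]
    rw [distNearestInt_eq_intCast_sub (hmem w hw), distNearestInt_eq_intCast_sub (hmem w' hw'),
      if_neg (Int.not_even_two_mul_add_one q)]
    ring

lemma g_eq_distNearestInt (k : ℕ) (x : ℝ) : g k x = distNearestInt (2 ^ k * x) / 2 ^ k := by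
  have hpow : (0 : ℝ) < 2 ^ k := by positivity
  have hdist : ∀ j : ℤ, dist x (j / 2 ^ k) = |2 ^ k * x - j| / 2 ^ k := fun j => by
    rw [Real.dist_eq, ← abs_of_pos hpow, ← abs_div, abs_of_pos hpow]
    congr 1
    field_simp
  refine le_antisymm ?_ ((Metric.le_infDist (⟨0, 0, by simp⟩ : (Dset k).Nonempty)).2 ?_)
  · calc g k x ≤ dist x (round (2 ^ k * x) / 2 ^ k) :=
          Metric.infDist_le_dist_of_mem ⟨round (2 ^ k * x), rfl⟩
      _ = distNearestInt (2 ^ k * x) / 2 ^ k := hdist _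
  · rintro _ ⟨j, rfl⟩
    rw [hdist]
    gcongr
    exact distNearestInt_le _ _

def takagi (u : ℝ) : ℝ := ∑' k : ℕ, distNearestInt (2 ^ k * u) / 2 ^ k

lemma distNearestInt_two_pow_mul_div_le (k : ℕ) (u : ℝ) :
    distNearestInt (2 ^ k * u) / 2 ^ k ≤ 1 / 2 * (1 / 2) ^ k :=
  calc distNearestInt (2 ^ k * u) / 2 ^ k ≤ 1 / 2 / 2 ^ k := by
        gcongr; exact distNearestInt_le_half _
    _ = 1 / 2 * (1 / 2) ^ k := by rw [one_div_pow]; ring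

lemma summable_takagi (u : ℝ) : Summable fun k : ℕ => distNearestInt (2 ^ k * u) / 2 ^ k :=
  .of_nonneg_of_le (fun k => div_nonneg (distNearestInt_nonneg _) (by positivity))
    (distNearestInt_two_pow_mul_div_le · u) (summable_geometric_two.mul_left _)

lemma takagi_nonneg (u : ℝ) : 0 ≤ takagi u :=
  tsum_nonneg fun k => div_nonneg (distNearestInt_nonneg _) (by positivity)

lemma takagi_le_one (u : ℝ) : takagi u ≤ 1 :=
  calc takagi u ≤ ∑' k : ℕ, 1 / 2 * (1 / 2 : ℝ) ^ k :=
        (summable_takagi u).tsum_le_tsum (distNearestInt_two_pow_mul_div_le · u)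
          (summable_geometric_two.mul_left _)
    _ = 1 := by rw [tsum_mul_left, tsum_geometric_two]; norm_num

lemma takagi_eq_sum_add (m : ℕ) (u : ℝ) :
    takagi u = ∑ k ∈ Finset.range m, distNearestInt (2 ^ k * u) / 2 ^ k +
      takagi (2 ^ m * u) / 2 ^ m := by
  rw [takagi, ← (summable_takagi u).sum_add_tsum_nat_add m, takagi, ← tsum_div_const]
  congr 1
  refine tsum_congr fun k => ?_
  rw [pow_add, div_div, mul_assoc]

lemma sum_le_takagi (m : ℕ) (u : ℝ) :
    ∑ k ∈ Finset.range m, distNearestInt (2 ^ k * u) / 2 ^ k ≤ takagi u :=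
  (summable_takagi u).sum_le_tsum _
    fun k _ => div_nonneg (distNearestInt_nonneg _) (by positivity)

lemma takagi_intCast_add (q : ℤ) (u : ℝ) : takagi (q + u) = takagi u := by
  refine tsum_congr fun k => ?_
  rw [mul_add, show (2 : ℝ) ^ k * q = ((2 ^ k * q : ℤ) : ℝ) by push_cast; ring,
    distNearestInt_intCast_add]

lemma takagi_le_five_mul_distNearestInt_add (u : ℝ) : takagi u ≤ 5 * distNearestInt u + 1 / 32 := by
  have hhead : ∑ k ∈ Finset.range 5, distNearestInt (2 ^ k * u) / 2 ^ k ≤ 5 * distNearestInt u :=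
    calc ∑ k ∈ Finset.range 5, distNearestInt (2 ^ k * u) / 2 ^ k
        ≤ ∑ _k ∈ Finset.range 5, distNearestInt u :=
          Finset.sum_le_sum fun k _ => by
            rw [div_le_iff₀ (by positivity)]
            linarith [distNearestInt_two_pow_mul_le k u]
      _ = 5 * distNearestInt u := by simp
  have htail : takagi (2 ^ 5 * u) / 2 ^ 5 ≤ 1 / 32 := by
    rw [div_le_iff₀ (by positivity)]
    norm_num
    exact takagi_le_one _
  linarith [takagi_eq_sum_add 5 u]

lemma one_half_le_takagi {u : ℝ} (hu : u ∈ Icc (1 / 4 : ℝ) (1 / 2)) : 1 / 2 ≤ takagi u := by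
  obtain ⟨h₁, h₂⟩ := hu
  have h := sum_le_takagi 2 u
  simp only [Finset.sum_range_succ, Finset.sum_range_zero] at h
  rw [distNearestInt_eq_sub_intCast (q := 0) (by norm_num; constructor <;> linarith),
    distNearestInt_eq_intCast_sub (q := 1) (by norm_num; constructor <;> linarith)] at h
  norm_num at h
  linarith

lemma five_eighths_le_takagi {u : ℝ} (hu : u ∈ Icc (5 / 16 : ℝ) (11 / 32)) :
    5 / 8 ≤ takagi u := by
  obtain ⟨h₁, h₂⟩ := hu
  have h := sum_le_takagi 4 u
  simp only [Finset.sum_range_succ, Finset.sum_range_zero] at h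
  rw [distNearestInt_eq_sub_intCast (q := 0) (by norm_num; constructor <;> linarith),
    distNearestInt_eq_intCast_sub (q := 1) (by norm_num; constructor <;> linarith),
    distNearestInt_eq_sub_intCast (q := 1) (by norm_num; constructor <;> linarith),
    distNearestInt_eq_intCast_sub (q := 3) (by norm_num; constructor <;> linarith)] at h
  norm_num at h
  linarith

lemma T_eq_sum_add (n : ℕ) (x : ℝ) :
    T x = ∑ k ∈ Finset.range n, g (k + 1) x + takagi (2 ^ (n + 1) * x) / 2 ^ (n + 1) := by
  have hg : ∀ k : ℕ, g (k + 1) x = distNearestInt (2 ^ k * (2 * x)) / 2 ^ k / 2 := fun k => by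
    rw [g_eq_distNearestInt, div_div, ← pow_succ,
      show (2 : ℝ) ^ k * (2 * x) = 2 ^ (k + 1) * x by ring]
  have hT : T x = takagi (2 * x) / 2 := by
    rw [T, takagi, ← tsum_div_const]
    exact tsum_congr hg
  rw [hT, takagi_eq_sum_add n, add_div, Finset.sum_div, Finset.sum_congr rfl fun k _ => (hg k).symm,
    div_div, ← pow_succ, show (2 : ℝ) ^ n * (2 * x) = 2 ^ (n + 1) * x by ring]

lemma g_sub_g {j : ℕ} {p : ℤ} {x y : ℝ} (hx : 2 * (2 ^ j * x) ∈ Icc (p : ℝ) (p + 1))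
    (hy : 2 * (2 ^ j * y) ∈ Icc (p : ℝ) (p + 1)) :
    g j y - g j x = (if Even p then 1 else -1) * (y - x) := by
  rw [g_eq_distNearestInt, g_eq_distNearestInt, ← sub_div, distNearestInt_sub_distNearestInt hy hx,
    ← mul_sub, mul_left_comm, mul_div_cancel_left₀ _ (by positivity)]

lemma hasDerivAt_g {j : ℕ} {p : ℤ} {x : ℝ} (hx : 2 * (2 ^ j * x) ∈ Ioo (p : ℝ) (p + 1)) :
    HasDerivAt (g j) (if Even p then 1 else -1) x := by
  have hnear : ∀ᶠ y in 𝓝 x, 2 * (2 ^ j * y) ∈ Ioo (p : ℝ) (p + 1) :=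
    (by fun_prop : Continuous fun y : ℝ => 2 * (2 ^ j * y)).continuousAt.eventually_mem
      (isOpen_Ioo.mem_nhds hx)
  have haffine : HasDerivAt (fun y => g j x + (if Even p then 1 else -1) * (y - x))
      (if Even p then 1 else -1) x := by
    simpa using (((hasDerivAt_id x).sub_const x).const_mul
      (if Even p then (1 : ℝ) else -1)).const_add (g j x)
  refine haffine.congr_of_eventuallyEq ?_
  filter_upwards [hnear] with y hy
  rw [← g_sub_g (Ioo_subset_Icc_self hx) (Ioo_subset_Icc_self hy)]
  ring

lemma two_pow_mul_ne_intCast {x : ℝ} (hx : x ∉ Ddyadic) (k : ℕ) (z : ℤ) : 2 ^ k * x ≠ z := by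
  intro h
  exact hx (mem_iUnion.2 ⟨k, z, by rw [← h, mul_div_cancel_left₀ x (by positivity)]⟩)

lemma deriv_g_eq {x : ℝ} (hx : x ∉ Ddyadic) (j : ℕ) :
    deriv (g j) x = if Even ⌊2 * (2 ^ j * x)⌋ then 1 else -1 := by
  refine (hasDerivAt_g ⟨(Int.floor_le _).lt_of_ne fun h => ?_, Int.lt_floor_add_one _⟩).deriv
  exact two_pow_mul_ne_intCast hx (j + 1) ⌊2 * (2 ^ j * x)⌋ (by rw [h]; ring)

lemma G'_succ (n : ℕ) (x : ℝ) : G' (n + 1) x = G' n x + deriv (g (n + 1)) x :=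
  Finset.sum_range_succ _ _

lemma G'_succ_eq_add_one_or_sub_one {x : ℝ} (hx : x ∉ Ddyadic) (n : ℕ) :
    G' (n + 1) x = G' n x + 1 ∨ G' (n + 1) x = G' n x - 1 := by
  rw [G'_succ, deriv_g_eq hx]
  split_ifs
  exacts [.inl rfl, .inr (sub_eq_add_neg _ _).symm]

lemma Int.fract_lt_half_of_even_floor_two_mul {w : ℝ} (h : Even ⌊2 * w⌋) :
    Int.fract w < 1 / 2 := by
  obtain ⟨q, hq⟩ := h
  have h₁ := Int.floor_le (2 * w)
  have h₂ := Int.lt_floor_add_one (2 * w)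
  rw [hq] at h₁ h₂
  push_cast at h₁ h₂
  rw [← Int.self_sub_floor, Int.floor_eq_iff.2 ⟨by linarith, by linarith⟩]
  linarith

lemma fract_lt_half_of_deriv_g_eq_one {x : ℝ} (hx : x ∉ Ddyadic) {j : ℕ}
    (h : deriv (g j) x = 1) : Int.fract (2 ^ j * x) < 1 / 2 := by
  rw [deriv_g_eq hx] at h
  split_ifs at h with heven
  · exact Int.fract_lt_half_of_even_floor_two_mul heven
  · norm_num at h

lemma mem_Icc_floor_of_natCast_mul_mem_Icc_floor {N : ℕ} (hN : 0 < N) {z w : ℝ}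
    (hw : N * w ∈ Icc (⌊N * z⌋ : ℝ) (⌊N * z⌋ + 1)) : w ∈ Icc (⌊z⌋ : ℝ) (⌊z⌋ + 1) := by
  have hN' : (0 : ℝ) < N := by exact_mod_cast hN
  have hlow : ⌊z⌋ * (N : ℤ) ≤ ⌊N * z⌋ :=
    Int.le_floor.2 (by push_cast; nlinarith [Int.floor_le z])
  have hup : ⌊N * z⌋ < (⌊z⌋ + 1) * (N : ℤ) :=
    Int.floor_lt.2 (by push_cast; nlinarith [Int.lt_floor_add_one z])
  have hlow' : (⌊z⌋ : ℝ) * N ≤ ⌊N * z⌋ := by exact_mod_cast hlow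
  have hup' : (⌊N * z⌋ : ℝ) + 1 ≤ (⌊z⌋ + 1) * N := by exact_mod_cast Int.add_one_le_iff.2 hup
  constructor <;> nlinarith [hw.1, hw.2]

lemma T_sub_T {x : ℝ} (hx : x ∉ Ddyadic) (n : ℕ) {y : ℝ}
    (hy : 2 ^ (n + 1) * y ∈ Icc (⌊2 ^ (n + 1) * x⌋ : ℝ) (⌊2 ^ (n + 1) * x⌋ + 1)) :
    T y - T x = G' n x * (y - x) +
      (takagi (2 ^ (n + 1) * y) - takagi (2 ^ (n + 1) * x)) / 2 ^ (n + 1) := by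
  have hterm : ∀ k ∈ Finset.range n,
      g (k + 1) y - g (k + 1) x = deriv (g (k + 1)) x * (y - x) := by
    intro k hk
    have hpow : (2 : ℝ) ^ (n + 1) = 2 ^ (n - k - 1) * 2 * 2 ^ (k + 1) := by
      rw [← pow_succ, ← pow_add]
      congr 1
      have := Finset.mem_range.1 hk
      omega
    have hscale : ∀ v : ℝ,
        ((2 ^ (n - k - 1) : ℕ) : ℝ) * (2 * (2 ^ (k + 1) * v)) = 2 ^ (n + 1) * v := fun v => by rw [hpow]; push_cast; ring
    have hnest : ∀ v : ℝ,
        2 ^ (n + 1) * v ∈ Icc (⌊2 ^ (n + 1) * x⌋ : ℝ) (⌊2 ^ (n + 1) * x⌋ + 1) →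
        2 * (2 ^ (k + 1) * v) ∈ Icc (⌊2 * (2 ^ (k + 1) * x)⌋ : ℝ) (⌊2 * (2 ^ (k + 1) * x)⌋ + 1) :=
      fun v hv => mem_Icc_floor_of_natCast_mul_mem_Icc_floor (N := 2 ^ (n - k - 1))
        (by positivity) (by rwa [hscale, hscale])
    rw [g_sub_g (hnest x ⟨Int.floor_le _, (Int.lt_floor_add_one _).le⟩) (hnest y hy),
      deriv_g_eq hx]
  rw [T_eq_sum_add n y, T_eq_sum_add n x, G', Finset.sum_mul, ← Finset.sum_congr rfl hterm,
    Finset.sum_sub_distrib]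
  ring

lemma slope_T_eq {x : ℝ} (hx : x ∉ Ddyadic) (n : ℕ) {u : ℝ} (hu : u ∈ Icc (0 : ℝ) 1)
    (hne : u ≠ Int.fract (2 ^ (n + 1) * x)) :
    (T ((⌊2 ^ (n + 1) * x⌋ + u) / 2 ^ (n + 1)) - T x) /
        ((⌊2 ^ (n + 1) * x⌋ + u) / 2 ^ (n + 1) - x) =
      G' n x + (takagi u - takagi (Int.fract (2 ^ (n + 1) * x))) /
        (u - Int.fract (2 ^ (n + 1) * x)) := by
  have hP : (0 : ℝ) < 2 ^ (n + 1) := by positivity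
  have hPy : 2 ^ (n + 1) * ((⌊2 ^ (n + 1) * x⌋ + u) / 2 ^ (n + 1)) = ⌊2 ^ (n + 1) * x⌋ + u :=
    mul_div_cancel₀ _ hP.ne'
  have hPx := (Int.floor_add_fract (2 ^ (n + 1) * x)).symm
  have hyx : (⌊2 ^ (n + 1) * x⌋ + u) / 2 ^ (n + 1) - x =
      (u - Int.fract (2 ^ (n + 1) * x)) / 2 ^ (n + 1) := by
    field_simp
    linarith
  rw [T_sub_T hx n (by rw [hPy]; exact ⟨by linarith [hu.1], by linarith [hu.2]⟩), hPy,
    takagi_intCast_add]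
  nth_rewrite 2 [hPx]
  rw [takagi_intCast_add, hyx]
  field_simp [sub_ne_zero.2 hne]

lemma density_ge_of_Ioc_subset {S : Set ℝ} {a r : ℝ} (hr : 0 < r) (h : Ioc a (a + r / 32) ⊆ S) :
    ENNReal.ofReal ((2 ^ 6 : ℝ)⁻¹) ≤ volume S / ENNReal.ofReal (2 * r) :=
  calc ENNReal.ofReal ((2 ^ 6 : ℝ)⁻¹) = ENNReal.ofReal (r / 32) / ENNReal.ofReal (2 * r) := by
        rw [← ENNReal.ofReal_div_of_pos (by positivity)]
        congr 1
        field_simp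
        norm_num
    _ ≤ volume S / ENNReal.ofReal (2 * r) := by
        gcongr
        simpa [Real.volume_Ioc] using measure_mono (μ := volume) h

lemma density_ge_of_takagi_slope_window {x : ℝ} (hx : x ∉ Ddyadic) (n : ℕ) {Q : ℝ → Prop}
    {c : ℝ} (hc₀ : 0 ≤ c) (hc₁ : c + 1 / 32 ≤ 1)
    (hQ : ∀ u ∈ Ioc c (c + 1 / 32), u ≠ Int.fract (2 ^ (n + 1) * x) ∧
      Q (G' n x + (takagi u - takagi (Int.fract (2 ^ (n + 1) * x))) /
        (u - Int.fract (2 ^ (n + 1) * x)))) :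
    ENNReal.ofReal ((2 ^ 6 : ℝ)⁻¹) ≤
      volume {y : ℝ | 0 < |y - x| ∧ |y - x| < (2 ^ (n + 1))⁻¹ ∧ Q ((T y - T x) / (y - x))} /
        ENNReal.ofReal (2 * (2 ^ (n + 1))⁻¹) := by
  have hslope := fun u (hu : u ∈ Icc (0 : ℝ) 1) => slope_T_eq hx n hu
  have ht₀ : 0 < Int.fract (2 ^ (n + 1) * x) :=
    Int.fract_pos.2 (two_pow_mul_ne_intCast hx (n + 1) _)
  have ht₁ := Int.fract_lt_one (2 ^ (n + 1) * x)
  have hPx := Int.floor_add_fract (2 ^ (n + 1) * x)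
  set P : ℝ := 2 ^ (n + 1)
  set m : ℤ := ⌊P * x⌋
  set t := Int.fract (P * x)
  have hP : 0 < P := by positivity
  refine density_ge_of_Ioc_subset (a := (m + c) / P) (inv_pos.2 hP) fun y hy => ?_
  obtain ⟨u, rfl⟩ : ∃ u, y = (m + u) / P := ⟨P * y - m, by field_simp; ring⟩
  have hu : u ∈ Ioc c (c + 1 / 32) := by
    obtain ⟨h₁, h₂⟩ := hy
    rw [div_lt_div_iff_of_pos_right hP] at h₁
    rw [show (m + c) / P + P⁻¹ / 32 = (m + (c + 1 / 32)) / P by ring,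
      div_le_div_iff_of_pos_right hP] at h₂
    exact ⟨by linarith, by linarith⟩
  obtain ⟨hne, hQu⟩ := hQ u hu
  have hyx : (m + u) / P - x = (u - t) * P⁻¹ := by
    field_simp
    linarith
  have hut : |u - t| < 1 := abs_sub_lt_iff.2 ⟨by linarith [hu.2], by linarith [hu.1]⟩
  refine ⟨?_, ?_, ?_⟩
  · rw [hyx, abs_pos]
    exact mul_ne_zero (sub_ne_zero.2 hne) (inv_ne_zero hP.ne')
  · rw [hyx, abs_mul, abs_of_pos (inv_pos.2 hP)]
    exact mul_lt_of_lt_one_left (inv_pos.2 hP) hut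
  · rw [hslope u ⟨by linarith [hu.1], by linarith [hu.2]⟩ hne]
    exact hQu

lemma takagi_slope_le {t u : ℝ} (ht : t < 1 / 2) (hu : u ∈ Ioc (31 / 32 : ℝ) 1) :
    (takagi u - takagi t) / (u - t) ≤ 2 / 5 := by
  obtain ⟨hu₁, hu₂⟩ := hu
  have hupper := takagi_le_five_mul_distNearestInt_add u
  rw [distNearestInt_eq_intCast_sub (q := 1) (by norm_num; constructor <;> linarith)] at hupper
  rw [div_le_iff₀ (by linarith)]
  push_cast at hupper
  linarith [takagi_nonneg t]

lemma exists_window_takagi_slope_ge {t : ℝ} (ht₀ : 0 < t) (ht : t < 1 / 2) :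
    ∃ c : ℝ, 0 ≤ c ∧ c + 1 / 32 ≤ 1 ∧
      ∀ u ∈ Ioc c (c + 1 / 32), u ≠ t ∧ 3 / 5 ≤ (takagi u - takagi t) / (u - t) := by
  have hupper := takagi_le_five_mul_distNearestInt_add t
  rw [distNearestInt_eq_sub_intCast (q := 0) (by norm_num; constructor <;> linarith)] at hupper
  push_cast at hupper
  by_cases hlarge : 3 / 5 * t + 7 / 40 ≤ takagi t
  · -- then `t > 1/32`, and on `(0, 1/32]` the bound `takagi u ≤ 5 u + 1/32` keeps the slope large
    refine ⟨0, le_rfl, by norm_num, fun u ⟨hu₁, hu₂⟩ => ⟨by linarith, ?_⟩⟩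
    have hu := takagi_le_five_mul_distNearestInt_add u
    rw [distNearestInt_eq_sub_intCast (q := 0) (by norm_num; constructor <;> linarith)] at hu
    push_cast at hu
    rw [le_div_iff_of_neg (by linarith)]
    linarith
  · have ht' : t < 1 / 4 := by
      by_contra! h
      linarith [one_half_le_takagi ⟨h, ht.le⟩]
    refine ⟨5 / 16, by norm_num, by norm_num, fun u ⟨hu₁, hu₂⟩ => ⟨by linarith, ?_⟩⟩
    rw [le_div_iff₀ (by linarith)]
    linarith [five_eighths_le_takagi ⟨hu₁.le, by linarith⟩]

lemma frequently_eq_and_eventually_ge_of_liminf_eq {a : ℕ → ℝ} (hint : ∀ n, ∃ z : ℤ, a n = z)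
    {I : ℝ} (hI : liminf (fun n => (a n : EReal)) atTop = I) :
    (∃ᶠ n in atTop, a n = I) ∧ ∀ᶠ n in atTop, I ≤ a n := by
  have hlow : ((I - 1 / 2 : ℝ) : EReal) < liminf (fun n => (a n : EReal)) atTop := by
    rw [hI]; exact_mod_cast (by linarith : I - 1 / 2 < I)
  have hhigh : liminf (fun n => (a n : EReal)) atTop < ((I + 1 / 2 : ℝ) : EReal) := by
    rw [hI]; exact_mod_cast (by linarith : I < I + 1 / 2)
  have hev : ∀ᶠ n in atTop, I - 1 / 2 < a n :=
    (eventually_lt_of_lt_liminf hlow).mono fun n hn => by exact_mod_cast hn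
  have hfreq : ∃ᶠ n in atTop, a n < I + 1 / 2 :=
    (frequently_lt_of_liminf_lt (by isBoundedDefault) hhigh).mono fun n hn => by exact_mod_cast hn
  obtain ⟨n₀, hn₀lt, hn₀gt⟩ := (hfreq.and_eventually hev).exists
  obtain ⟨z, hz⟩ := hint n₀
  have hge : ∀ᶠ n in atTop, (z : ℝ) ≤ a n := hev.mono fun n hn => by
    obtain ⟨w, hw⟩ := hint n
    rw [hw] at hn ⊢
    have : z - 1 < w := by exact_mod_cast (by linarith : (z : ℝ) - 1 < w)
    exact_mod_cast (by omega : z ≤ w)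
  have hle : ∃ᶠ n in atTop, a n ≤ z := hfreq.mono fun n hn => by
    obtain ⟨w, hw⟩ := hint n
    rw [hw] at hn ⊢
    have : w < z + 1 := by exact_mod_cast (by linarith : (w : ℝ) < z + 1)
    exact_mod_cast (by omega : w ≤ z)
  have hIz : I = z := by
    have : liminf (fun n => (a n : EReal)) atTop = (z : ℝ) := le_antisymm
      (liminf_le_of_frequently_le' (hle.mono fun n hn => by exact_mod_cast hn))
      (le_liminf_of_le (by isBoundedDefault) (hge.mono fun n hn => by exact_mod_cast hn))
    exact_mod_cast hI.symm.trans this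
  rw [hIz]
  exact ⟨(hle.and_eventually hge).mono fun n hn => le_antisymm hn.1 hn.2, hge⟩

lemma frequently_eq_liminf_and_succ_eq_add_one {a : ℕ → ℝ} (h₀ : ∃ z : ℤ, a 0 = z)
    (hstep : ∀ n, a (n + 1) = a n + 1 ∨ a (n + 1) = a n - 1) {I : ℝ}
    (hI : liminf (fun n => (a n : EReal)) atTop = I) :
    ∃ᶠ n in atTop, a n = I ∧ a (n + 1) = a n + 1 := by
  have hint : ∀ n, ∃ z : ℤ, a n = z := by
    intro n
    induction n with
    | zero => exact h₀
    | succ n ih =>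
      obtain ⟨z, hz⟩ := ih
      rcases hstep n with h | h
      exacts [⟨z + 1, by rw [h, hz]; push_cast; ring⟩, ⟨z - 1, by rw [h, hz]; push_cast; ring⟩]
  obtain ⟨hfreq, hge⟩ := frequently_eq_and_eventually_ge_of_liminf_eq hint hI
  have hge' : ∀ᶠ n in atTop, I ≤ a (n + 1) := (tendsto_add_atTop_nat 1).eventually hge
  exact (hfreq.and_eventually hge').mono fun n ⟨hn, hn₁⟩ =>
    ⟨hn, (hstep n).resolve_right fun h => by linarith⟩

theorem takagi_density_bounds_of_finite_liminf_general (x : ℝ) (hx : x ∉ Ddyadic) (I : ℝ)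
    (hI : liminf (fun n : ℕ => ((G' n x : ℝ) : EReal)) atTop = (I : EReal)) :
    ENNReal.ofReal (((2 : ℝ) ^ (6 : ℕ))⁻¹) ≤
      limsup (fun r : ℝ =>
        volume {y : ℝ | 0 < |y - x| ∧ |y - x| < r ∧
          (T y - T x) / (y - x) ≤ I + 2 / 5} / ENNReal.ofReal (2 * r))
        (nhdsWithin 0 (Ioi 0)) ∧
    ENNReal.ofReal (((2 : ℝ) ^ (6 : ℕ))⁻¹) ≤
      limsup (fun r : ℝ =>
        volume {y : ℝ | 0 < |y - x| ∧ |y - x| < r ∧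
          I + 3 / 5 ≤ (T y - T x) / (y - x)} / ENNReal.ofReal (2 * r))
        (nhdsWithin 0 (Ioi 0)) := by
  have hgood : ∃ᶠ n in atTop, G' n x = I ∧ Int.fract (2 ^ (n + 1) * x) < 1 / 2 :=
    (frequently_eq_liminf_and_succ_eq_add_one ⟨0, by simp [G']⟩
      (G'_succ_eq_add_one_or_sub_one hx) hI).mono fun n ⟨hn, hup⟩ =>
      ⟨hn, fract_lt_half_of_deriv_g_eq_one hx (by linarith [G'_succ n x])⟩
  have hr : Tendsto (fun n : ℕ => ((2 : ℝ) ^ (n + 1))⁻¹) atTop (𝓝[>] 0) :=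
    tendsto_nhdsWithin_iff.2 ⟨tendsto_inv_atTop_zero.comp
      ((tendsto_pow_atTop_atTop_of_one_lt one_lt_two).comp (tendsto_add_atTop_nat 1)),
      .of_forall fun n => mem_Ioi.2 (by positivity)⟩
  constructor
  · refine le_limsup_of_frequently_le' (hr.frequently (hgood.mono fun n ⟨hn, ht⟩ => ?_))
    refine density_ge_of_takagi_slope_window hx n (Q := (· ≤ I + 2 / 5)) (c := 31 / 32)
      (by norm_num) (by norm_num) fun u ⟨hu₁, hu₂⟩ =>
        ⟨(by linarith : Int.fract (2 ^ (n + 1) * x) < u).ne', ?_⟩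
    linarith [takagi_slope_le ht ⟨hu₁, by linarith⟩]
  · refine le_limsup_of_frequently_le' (hr.frequently (hgood.mono fun n ⟨hn, ht⟩ => ?_))
    obtain ⟨c, hc₀, hc₁, hc⟩ := exists_window_takagi_slope_ge
      (Int.fract_pos.2 (two_pow_mul_ne_intCast hx (n + 1) _)) ht
    refine density_ge_of_takagi_slope_window hx n (Q := (I + 3 / 5 ≤ ·)) hc₀ hc₁
      fun u hu => ⟨(hc u hu).1, ?_⟩
    linarith [(hc u hu).2]

theorem takagi_density_bounds_of_finite_liminf (x : ℝ) (hx : x ∉ Ddyadic) (I : ℝ)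
    (hI : liminf (fun n : ℕ => ((G' n x : ℝ) : EReal)) atTop = (I : EReal))
    (hT : ∃ L : ℝ, ApproxDerivAt T x L) :
    ENNReal.ofReal (((2 : ℝ) ^ (6 : ℕ))⁻¹) ≤
      limsup (fun r : ℝ =>
        volume {y : ℝ | 0 < |y - x| ∧ |y - x| < r ∧
          (T y - T x) / (y - x) ≤ I + 2 / 5} / ENNReal.ofReal (2 * r))
        (nhdsWithin 0 (Ioi 0)) ∧
    ENNReal.ofReal (((2 : ℝ) ^ (6 : ℕ))⁻¹) ≤
      limsup (fun r : ℝ =>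
        volume {y : ℝ | 0 < |y - x| ∧ |y - x| < r ∧
          I + 3 / 5 ≤ (T y - T x) / (y - x)} / ENNReal.ofReal (2 * r))
        (nhdsWithin 0 (Ioi 0)) :=
  takagi_density_bounds_of_finite_liminf_general x hx I hI
end
end
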